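/- arXiv:0706.3604 — 2 statements merged into one kernel-verified Lean document; each statement's English description precedes it below -/
import Mathlib

section
/- For spinors ψ ∈ ℂ², the Clifford action of the quadratic covector q(ψ) equals the rank-one operator ψ* ⊗ ψ minus half the norm-squared times the identity: c(q(ψ))φ = ⟨φ,ψ⟩ψ - (1/2)|ψ|²φ for all φ ∈ ℂ² (Hermitian metric complex-linear in the first entry). -/
open Complex

/-- The Pauli matrices `σ₁, σ₂, σ₃`. -/
noncomputable def pauli : Fin 3 → Matrix (Fin 2) (Fin 2) ℂ :=
  ![!![0, 1; 1, 0], !![0, -I; I, 0], !![1, 0; 0, -1]]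

/-- Clifford multiplication by the basis vectors: `c(e_j) = -i σ_j`. -/
noncomputable def cmul (j : Fin 3) : Matrix (Fin 2) (Fin 2) ℂ := (-I) • pauli j

/-- The Hermitian inner product on `Δ = ℂ²`, complex-linear in the first entry. -/
noncomputable def inner' (ψ φ : Fin 2 → ℂ) : ℂ := ∑ j, ψ j * (starRingEnd ℂ) (φ j)

/-- The real coefficients of the imaginary covector `q(ψ) = -(1/2)⟨c(e_j)ψ,ψ⟩ e^j`,
i.e. `q(ψ) = i·∑ (qCoeff ψ j) e^j` since each `⟨c(e_j)ψ,ψ⟩` is purely imaginary. -/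
noncomputable def qCoeff (ψ : Fin 2 → ℂ) (j : Fin 3) : ℝ :=
  -(1/2) * (inner' ((cmul j).mulVec ψ) ψ).im

/-- Clifford multiplication by `q(ψ)`: `c(iα) = i·c(v_α)` with `α_j = qCoeff ψ j`. -/
noncomputable def cq (ψ : Fin 2 → ℂ) : Matrix (Fin 2) (Fin 2) ℂ :=
  I • ∑ j, (qCoeff ψ j : ℂ) • cmul j

/-- `c(q(ψ))φ = ⟨φ,ψ⟩ψ - (1/2)|ψ|²φ` for all spinors `φ`. -/
theorem stmt1 (ψ φ : Fin 2 → ℂ) :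
    (cq ψ).mulVec φ
      = inner' φ ψ • ψ - (((1/2) * ∑ j, normSq (ψ j) : ℝ) : ℂ) • φ := by
  funext k
  simp only [cq, qCoeff, cmul, inner', pauli, Matrix.mulVec, dotProduct,
    Fin.sum_univ_three, Fin.sum_univ_two, Matrix.smul_apply, Matrix.sum_apply,
    Pi.smul_apply, Pi.sub_apply, smul_eq_mul, normSq]
  fin_cases k <;>
  · simp [Matrix.cons_val_zero, Matrix.cons_val_one, Matrix.head_cons, Complex.ext_iff,
      mul_im, mul_re, Complex.ofReal_im, Complex.ofReal_re]
    exact ⟨by ring, by ring⟩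
end

section
/- If ψ ≠ 0 in ℂ², then the four vectors iψ, c(e₁)iψ, c(e₂)iψ, c(e₃)iψ form an orthogonal basis of ℂ² viewed as a 4-dimensional real inner product space with inner product Re⟨·,·⟩. -/
open Complex

/-- The quadruple of vectors `iψ, c(e₁)iψ, c(e₂)iψ, c(e₃)iψ`. -/
noncomputable def quad (ψ : Fin 2 → ℂ) : Fin 4 → (Fin 2 → ℂ) :=
  ![I • ψ, (cmul 0).mulVec (I • ψ), (cmul 1).mulVec (I • ψ), (cmul 2).mulVec (I • ψ)]

lemma key (ψ : Fin 2 → ℂ) (i j : Fin 4) :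
    (inner' (quad ψ i) (quad ψ j)).re = if i = j then (inner' ψ ψ).re else 0 := by
  fin_cases i <;> fin_cases j <;>
    simp [quad, cmul, pauli, inner', Matrix.mulVec, dotProduct,
      Fin.sum_univ_two, Complex.mul_re, Complex.mul_im] <;> ring

/-- `x ↦ Re (inner' x φ)` as a real linear map. -/
noncomputable def Lmap (φ : Fin 2 → ℂ) : (Fin 2 → ℂ) →ₗ[ℝ] ℝ where
  toFun x := (inner' x φ).re
  map_add' x y := by simp [inner', add_mul, Finset.sum_add_distrib]
  map_smul' r x := by
    simp [inner', Finset.mul_sum, Fin.sum_univ_two, Pi.smul_apply,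
      Complex.real_smul, mul_assoc]; ring

lemma npos (ψ : Fin 2 → ℂ) (hψ : ψ ≠ 0) : 0 < (inner' ψ ψ).re := by
  have h : (inner' ψ ψ).re = Complex.normSq (ψ 0) + Complex.normSq (ψ 1) := by
    simp [inner', Fin.sum_univ_two, Complex.normSq_apply, Complex.mul_re]
  rw [h]
  rcases Function.ne_iff.mp hψ with ⟨j, hj⟩
  fin_cases j <;> simp at hj <;>
    [exact add_pos_of_pos_of_nonneg (Complex.normSq_pos.mpr hj) (Complex.normSq_nonneg _);
     exact add_pos_of_nonneg_of_pos (Complex.normSq_nonneg _) (Complex.normSq_pos.mpr hj)]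

/-- If `ψ ≠ 0`, then `iψ, c(e₁)iψ, c(e₂)iψ, c(e₃)iψ` form an orthogonal basis of
`ℂ²` viewed as a real inner product space with inner product `Re⟨·,·⟩`. -/
theorem stmt5 (ψ : Fin 2 → ℂ) (hψ : ψ ≠ 0) :
    (∀ i j, i ≠ j → (inner' (quad ψ i) (quad ψ j)).re = 0) ∧
    LinearIndependent ℝ (quad ψ) ∧
    Submodule.span ℝ (Set.range (quad ψ)) = ⊤ := by
  have hn := npos ψ hψ
  have hli : LinearIndependent ℝ (quad ψ) := by
    rw [Fintype.linearIndependent_iff]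
    intro g hg j
    have h0 : Lmap (quad ψ j) (∑ i, g i • quad ψ i) = 0 := by rw [hg]; simp [Lmap, inner']
    rw [map_sum] at h0
    simp only [map_smul, smul_eq_mul] at h0
    have : ∀ i, g i * Lmap (quad ψ j) (quad ψ i) = if i = j then g j * (inner' ψ ψ).re else 0 := by
      intro i
      simp only [Lmap, LinearMap.coe_mk, AddHom.coe_mk, key]
      by_cases h : i = j <;> simp [h]
    rw [Finset.sum_congr rfl (fun i _ => this i), Finset.sum_ite_eq' _ j] at h0
    simp at h0
    exact h0.resolve_right (by linarith)
  refine ⟨fun i j hij => by rw [key]; simp [hij], hli, ?_⟩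
  apply LinearIndependent.span_eq_top_of_card_eq_finrank hli
  simp [Module.finrank_pi_fintype, Complex.finrank_real_complex]
end
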